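/- arXiv:1111.1295 — 2 statements merged into one kernel-verified Lean document; each statement's English description precedes it below -/
import Mathlib

section
/- (Splitting of the Boson–Fermion component) For all natural numbers k ≥ 1 and q ≥ 1 with n = k + q, the subspace H_{k,q} of H^{⊗n} decomposes as the internal direct sum H_{k,q} = H_{k,q}^+ ⊕ H_{k,q}^−, where H_{k,q}^+ = H_{k,q} ∩ H^{⊙[k+1],∧[q−1]} and H_{k,q}^− = H_{k,q} ∩ H^{⊙[k−1],∧[q+1]}. -/
open scoped BigOperators

noncomputable section

variable (F : Type*) [Field F] [CharZero F] (H : Type*) [AddCommGroup H] [Module F H]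

/-- The `n`-th tensor power of `H` over `F`. -/
abbrev TP (n : ℕ) : Type _ := PiTensorProduct F (fun _ : Fin n => H)

/-- The action of a permutation `σ ∈ S_n` on the `n`-th tensor power,
permuting the tensor factors. -/
def permMap (n : ℕ) (σ : Equiv.Perm (Fin n)) : TP F H n →ₗ[F] TP F H n :=
  (PiTensorProduct.reindex F (fun _ : Fin n => H) σ).toLinearMap

/-- Identification of tensor powers of equal degrees. -/
def tpCast {m m' : ℕ} (hm : m = m') : TP F H m →ₗ[F] TP F H m' :=
  (PiTensorProduct.reindex F (fun _ : Fin m => H) (finCongr hm)).toLinearMap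

/-- The permutations of `{1, …, n}` moving only positions in `a`. -/
def permsOn (n : ℕ) (a : Finset (Fin n)) : Finset (Equiv.Perm (Fin n)) :=
  Finset.univ.filter fun σ => ∀ i, i ∉ a → σ i = i

/-- `S_a`: symmetrisation over the positions in `a` (the average over all
permutations of the positions in `a`, fixing the other positions). -/
def symOn (n : ℕ) (a : Finset (Fin n)) : TP F H n →ₗ[F] TP F H n :=
  (a.card.factorial : F)⁻¹ • ∑ σ ∈ permsOn n a, permMap F H n σ

/-- `A_a`: skew-symmetrisation over the positions in `a` (the signed average over
all permutations of the positions in `a`, fixing the other positions). -/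
def altOn (n : ℕ) (a : Finset (Fin n)) : TP F H n →ₗ[F] TP F H n :=
  (a.card.factorial : F)⁻¹ • ∑ σ ∈ permsOn n a, (Equiv.Perm.sign σ : ℤ) • permMap F H n σ

/-- The first `k` positions of `{1, …, n}`. -/
def firstSet (n k : ℕ) : Finset (Fin n) := Finset.univ.filter fun i => (i : ℕ) < k

/-- The last `m` positions of `{1, …, n}`. -/
def lastSet (n m : ℕ) : Finset (Fin n) := Finset.univ.filter fun i => n - m ≤ (i : ℕ)

/-- `H^{⊙a,∧aᶜ}`: the image of `S_a ∘ A_{aᶜ}`, the subspace of `n`-tensors symmetric in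
the positions of `a` and skew-symmetric in the positions of `aᶜ`. -/
def Hgen (n : ℕ) (a : Finset (Fin n)) : Submodule F (TP F H n) :=
  LinearMap.range (symOn F H n a ∘ₗ altOn F H n aᶜ)

/-- `H_{k,n-k} = H^{⊙k} ⊗ H^{∧(n-k)}`: the subspace of `n`-tensors symmetric in the
first `k` positions and skew-symmetric in the remaining positions. -/
def Hmix (n k : ℕ) : Submodule F (TP F H n) := Hgen F H n (firstSet n k)

/-- `H^{⊙[k],∧[n-k]}`: the span of the subspaces `H^{⊙a,∧aᶜ}` over all `k`-element
subsets `a ⊆ {1, …, n}`. -/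
def HmixSpan (n k : ℕ) : Submodule F (TP F H n) :=
  ⨆ a ∈ {a : Finset (Fin n) | a.card = k}, Hgen F H n a

/-- The global operator whose restriction to `H_{k,q}` (with `m = q + 1`, `n = k + q`)
is `d̆_q`: skew-symmetrisation of the last `m` positions, scaled by `m`. -/
def dOp (n m : ℕ) : TP F H n →ₗ[F] TP F H n := (m : F) • altOn F H n (lastSet n m)

/-- The global operator whose restriction to `H_{k-1,q+1}` (with `m = k`, `n = k + q`)
is `d̆*_q`: symmetrisation of the first `m` positions, scaled by `m`. -/
def dStarOp (n m : ℕ) : TP F H n →ₗ[F] TP F H n := (m : F) • symOn F H n (firstSet n m)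

/-- The elementary element `h₁⊙…⊙h_k ⊗ x₁∧…∧x_q` of `H_{k,q} ⊆ H^{⊗(k+q)}`. -/
def elem (k q : ℕ) (h : Fin k → H) (x : Fin q → H) : TP F H (k + q) :=
  ∑ ρ : Equiv.Perm (Fin k), ∑ τ : Equiv.Perm (Fin q),
    (Equiv.Perm.sign τ : ℤ) •
      (PiTensorProduct.tprod F (Fin.append (h ∘ ρ) (x ∘ τ)) : TP F H (k + q))

/-!
Let `v` be symmetric in the positions of `a` and skew-symmetric in those of `aᶜ`, with
`k = #a ≥ 1` and `q = #aᶜ ≥ 1`; pick `j ∈ a` and `i ∉ a`. Put `T = A_{aᶜ} S_{a ∪ {i}} v` and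
`U = S_a A_{aᶜ ∪ {j}} v`. Splitting `S_{a ∪ {i}}` and `A_{aᶜ ∪ {j}}` into cosets of the smaller
groups expresses both through the single vector `w = S_a A_{aᶜ} ((i j) v)`:
`(k + 1) T = v + k w` and `(q + 1) U = v - q w`, so `(k + q) v = q (k + 1) T + k (q + 1) U`.
Since `T ∈ H^{⊙[k+1],∧[q-1]}` and `U ∈ H^{⊙[k-1],∧[q+1]}`, this gives the sum. Conversely,
`A_{aᶜ ∪ {j}}` kills `H^{⊙[k+1],∧[q-1]}` and `S_{a ∪ {i}}` kills `H^{⊙[k-1],∧[q+1]}`, because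
each generator is symmetric (resp. skew-symmetric) in two of the positions concerned; so on the
intersection `T = U = 0`, hence `v = 0`.
-/

open Finset Equiv
open scoped Nat

section PermsOn

variable {n : ℕ} {a b : Finset (Fin n)} {σ τ : Perm (Fin n)}

theorem mem_permsOn : σ ∈ permsOn n a ↔ ∀ i ∉ a, σ i = i := by
  simp [permsOn]

theorem card_permsOn (a : Finset (Fin n)) : #(permsOn n a) = (#a)! := by
  rw [← card_perms_of_finset a]
  congr 1
  ext σ
  rw [mem_permsOn, mem_perms_of_finset_iff]
  exact ⟨fun h i => Not.imp_symm (h i), fun h i => Not.imp_symm h⟩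

theorem mul_mem_permsOn (hσ : σ ∈ permsOn n a) (hτ : τ ∈ permsOn n a) :
    σ * τ ∈ permsOn n a :=
  mem_permsOn.2 fun i hi => by rw [Perm.mul_apply, mem_permsOn.1 hτ i hi, mem_permsOn.1 hσ i hi]

theorem inv_mem_permsOn (hσ : σ ∈ permsOn n a) : σ⁻¹ ∈ permsOn n a :=
  mem_permsOn.2 fun i hi => by rw [Perm.inv_eq_iff_eq, mem_permsOn.1 hσ i hi]

theorem permsOn_mono (h : a ⊆ b) : permsOn n a ⊆ permsOn n b := fun _ hσ =>
  mem_permsOn.2 fun i hi => mem_permsOn.1 hσ i fun hia => hi (h hia)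

theorem swap_mem_permsOn {i j : Fin n} (hi : i ∈ a) (hj : j ∈ a) : swap i j ∈ permsOn n a :=
  mem_permsOn.2 fun _ hl =>
    swap_apply_of_ne_of_ne (fun h => hl (h ▸ hi)) (fun h => hl (h ▸ hj))

theorem mem_permsOn_image_iff : τ ∈ permsOn n (a.image σ) ↔ σ⁻¹ * τ * σ ∈ permsOn n a := by
  simp only [mem_permsOn, mem_image, not_exists, not_and, Perm.mul_apply, Perm.inv_eq_iff_eq]
  refine ⟨fun h i hi => h _ fun j hj hji => hi (σ.injective hji ▸ hj), fun h j hj => ?_⟩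
  simpa using h (σ⁻¹ j) fun hmem => hj _ hmem (by simp)

theorem commute_of_mem_permsOn (hd : Disjoint a b) (hσ : σ ∈ permsOn n a)
    (hτ : τ ∈ permsOn n b) : Commute σ τ :=
  Perm.Disjoint.commute fun i =>
    if hi : i ∈ a then .inr (mem_permsOn.1 hτ i (disjoint_left.1 hd hi))
    else .inl (mem_permsOn.1 hσ i hi)

theorem sign_cast_mul_self {R : Type*} [Ring R] (σ : Perm (Fin n)) :
    (Perm.sign σ : R) * Perm.sign σ = 1 := by
  rw [← Int.cast_mul, ← Units.val_mul, Int.units_mul_self, Units.val_one, Int.cast_one]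

theorem compl_image_perm (σ : Perm (Fin n)) (a : Finset (Fin n)) :
    (a.image σ)ᶜ = aᶜ.image σ := by
  rw [← coe_inj, coe_compl, coe_image, coe_image, coe_compl, Set.image_compl_eq σ.bijective]

theorem one_lt_card_inter (h : n + 1 < #a + #b) : 1 < #(a ∩ b) := by
  have := card_inter_add_card_union a b
  have := card_le_univ (a ∪ b)
  rw [Fintype.card_fin] at this
  omega

variable {M : Type*} [AddCommMonoid M]

theorem sum_permsOn_mul_right (hτ : τ ∈ permsOn n a) (f : Perm (Fin n) → M) :
    ∑ σ ∈ permsOn n a, f (σ * τ) = ∑ σ ∈ permsOn n a, f σ :=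
  sum_nbij' (· * τ) (· * τ⁻¹) (fun _ hσ => mul_mem_permsOn hσ hτ)
    (fun _ hσ => mul_mem_permsOn hσ (inv_mem_permsOn hτ)) (fun _ _ => by simp)
    (fun _ _ => by simp) fun _ _ => rfl

theorem sum_permsOn_mul_left (hτ : τ ∈ permsOn n a) (f : Perm (Fin n) → M) :
    ∑ σ ∈ permsOn n a, f (τ * σ) = ∑ σ ∈ permsOn n a, f σ :=
  sum_nbij' (τ * ·) (τ⁻¹ * ·) (fun _ hσ => mul_mem_permsOn hτ hσ)
    (fun _ hσ => mul_mem_permsOn (inv_mem_permsOn hτ) hσ) (fun _ _ => by simp)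
    (fun _ _ => by simp) fun _ _ => rfl

theorem sum_permsOn_conj (σ : Perm (Fin n)) (f : Perm (Fin n) → M) :
    ∑ τ ∈ permsOn n a, f (σ * τ * σ⁻¹) = ∑ τ ∈ permsOn n (a.image σ), f τ :=
  sum_nbij' (σ * · * σ⁻¹) (σ⁻¹ * · * σ)
    (fun τ hτ => mem_permsOn_image_iff.2 (by simpa [mul_assoc] using hτ))
    (fun _ hτ => mem_permsOn_image_iff.1 hτ) (fun _ _ => by simp [mul_assoc])
    (fun _ _ => by simp [mul_assoc]) fun _ _ => rfl

/-- Right cosets of `permsOn a` in `permsOn (insert i a)`: `σ = π * swap (σ⁻¹ i) i` with `π`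
fixing `i`. -/
theorem sum_permsOn_insert {i : Fin n} (hi : i ∉ a) (f : Perm (Fin n) → M) :
    ∑ σ ∈ permsOn n (insert i a), f σ =
      ∑ l ∈ insert i a, ∑ π ∈ permsOn n a, f (π * swap l i) := by
  rw [← sum_product']
  refine sum_nbij' (fun σ => (σ⁻¹ i, σ * swap (σ⁻¹ i) i)) (fun p => p.2 * swap p.1 i)
    (fun σ hσ => ?_) (fun p hp => ?_) (fun σ _ => by simp) (fun p hp => ?_)
    (fun σ _ => by simp)
  · have hσi : σ⁻¹ i ∈ insert i a := by
      by_contra h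
      have hfix : i = σ⁻¹ i := (σ.apply_symm_apply i).symm.trans (mem_permsOn.1 hσ _ h)
      rw [← hfix] at h
      exact h (mem_insert_self i a)
    refine mem_product.2 ⟨hσi, mem_permsOn.2 fun l hl => ?_⟩
    rcases eq_or_ne l i with rfl | hli
    · simp
    · have hl' : l ∉ insert i a := by simp [hli, hl]
      rw [Perm.mul_apply, swap_apply_of_ne_of_ne (fun h => hl' (by rwa [h])) hli]
      exact mem_permsOn.1 hσ l hl'
  · obtain ⟨hl, hπ⟩ := mem_product.1 hp
    refine mem_permsOn.2 fun m hm => ?_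
    rw [mem_insert, not_or] at hm
    have hml : m ≠ p.1 := fun h => (mem_insert.1 (h ▸ hl)).elim hm.1 hm.2
    rw [Perm.mul_apply, swap_apply_of_ne_of_ne hml hm.1, mem_permsOn.1 hπ m hm.2]
  · have hπi : p.2⁻¹ i = i := by
      rw [Perm.inv_eq_iff_eq, mem_permsOn.1 (mem_product.1 hp).2 i hi]
    have h1 : (p.2 * swap p.1 i)⁻¹ i = p.1 := by
      rw [mul_inv_rev, Perm.mul_apply, hπi, swap_inv, swap_apply_right]
    refine Prod.ext h1 ?_
    dsimp only
    rw [h1, mul_swap_mul_self]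

end PermsOn

section PermutationAction

variable {F H} {n : ℕ} {a b : Finset (Fin n)} {σ τ : Perm (Fin n)} {v : TP F H n}

omit [CharZero F]

theorem permMap_mul (σ τ : Perm (Fin n)) (v : TP F H n) :
    permMap F H n (σ * τ) v = permMap F H n σ (permMap F H n τ v) :=
  (PiTensorProduct.reindex_reindex (R := F) (s := fun _ : Fin n => H) τ σ v).symm

theorem permMap_one (v : TP F H n) : permMap F H n 1 v = v := by
  simp only [permMap, LinearEquiv.coe_coe]
  exact PiTensorProduct.reindex_refl (R := F) (s := fun _ : Fin n => H) ▸ rfl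

theorem symOn_apply (a : Finset (Fin n)) (v : TP F H n) :
    symOn F H n a v = ((#a)! : F)⁻¹ • ∑ σ ∈ permsOn n a, permMap F H n σ v := by
  simp [symOn, LinearMap.sum_apply]

theorem altOn_apply (a : Finset (Fin n)) (v : TP F H n) :
    altOn F H n a v =
      ((#a)! : F)⁻¹ • ∑ σ ∈ permsOn n a, (Perm.sign σ : F) • permMap F H n σ v := by
  simp [altOn, LinearMap.sum_apply, ← Int.cast_smul_eq_zsmul F]

theorem symOn_permMap (hτ : τ ∈ permsOn n a) (v : TP F H n) :
    symOn F H n a (permMap F H n τ v) = symOn F H n a v := by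
  simp only [symOn_apply, ← permMap_mul, sum_permsOn_mul_right hτ fun σ => permMap F H n σ v]

theorem permMap_symOn (hτ : τ ∈ permsOn n a) (v : TP F H n) :
    permMap F H n τ (symOn F H n a v) = symOn F H n a v := by
  simp only [symOn_apply, map_smul, map_sum, ← permMap_mul,
    sum_permsOn_mul_left hτ fun σ => permMap F H n σ v]

theorem altOn_permMap (hτ : τ ∈ permsOn n a) (v : TP F H n) :
    altOn F H n a (permMap F H n τ v) = (Perm.sign τ : F) • altOn F H n a v := by
  rw [altOn_apply, altOn_apply, smul_comm (Perm.sign τ : F)]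
  congr 1
  rw [← sum_permsOn_mul_right hτ fun σ => (Perm.sign σ : F) • permMap F H n σ v, smul_sum]
  refine sum_congr rfl fun σ _ => ?_
  rw [permMap_mul, smul_smul, Perm.sign_mul, Units.val_mul, Int.cast_mul, mul_left_comm,
    sign_cast_mul_self, mul_one]

theorem permMap_altOn (hτ : τ ∈ permsOn n a) (v : TP F H n) :
    permMap F H n τ (altOn F H n a v) = (Perm.sign τ : F) • altOn F H n a v := by
  rw [altOn_apply, map_smul, map_sum, smul_comm (Perm.sign τ : F)]
  congr 1
  rw [← sum_permsOn_mul_left hτ fun σ => (Perm.sign σ : F) • permMap F H n σ v, smul_sum]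
  refine sum_congr rfl fun σ _ => ?_
  rw [map_smul, permMap_mul, smul_smul, Perm.sign_mul, Units.val_mul, Int.cast_mul, ← mul_assoc,
    sign_cast_mul_self, one_mul]

theorem permMap_altOn_of_disjoint (hd : Disjoint a b) (hτ : τ ∈ permsOn n a) (v : TP F H n) :
    permMap F H n τ (altOn F H n b v) = altOn F H n b (permMap F H n τ v) := by
  simp only [altOn_apply, map_smul, map_sum, ← permMap_mul]
  congr 1
  refine sum_congr rfl fun σ hσ => ?_
  rw [(commute_of_mem_permsOn hd hτ hσ).eq]

theorem symOn_altOn_comm (hd : Disjoint a b) (v : TP F H n) :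
    symOn F H n a (altOn F H n b v) = altOn F H n b (symOn F H n a v) := by
  simp only [symOn_apply, map_smul, map_sum]
  congr 1
  exact sum_congr rfl fun τ hτ => permMap_altOn_of_disjoint hd hτ v

theorem permMap_symOn_eq (σ : Perm (Fin n)) (v : TP F H n) :
    permMap F H n σ (symOn F H n a v) = symOn F H n (a.image σ) (permMap F H n σ v) := by
  rw [symOn_apply, symOn_apply, map_smul, map_sum, card_image_of_injective a σ.injective,
    ← sum_permsOn_conj σ]
  congr 1
  refine sum_congr rfl fun τ _ => ?_
  simp only [← permMap_mul, mul_assoc, inv_mul_cancel, mul_one]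

theorem permMap_altOn_eq (σ : Perm (Fin n)) (v : TP F H n) :
    permMap F H n σ (altOn F H n a v) = altOn F H n (a.image σ) (permMap F H n σ v) := by
  rw [altOn_apply, altOn_apply, map_smul, map_sum, card_image_of_injective a σ.injective,
    ← sum_permsOn_conj σ]
  congr 1
  refine sum_congr rfl fun τ _ => ?_
  rw [Perm.sign_mul, Perm.sign_mul, Perm.sign_inv, mul_right_comm, Int.units_mul_self, one_mul,
    map_smul, ← permMap_mul, ← permMap_mul, inv_mul_cancel_right]

end PermutationAction

section Symmetrization

variable {F H} {n : ℕ} {a b : Finset (Fin n)} {σ τ : Perm (Fin n)} {v : TP F H n}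

theorem symOn_eq_self (h : ∀ σ ∈ permsOn n a, permMap F H n σ v = v) : symOn F H n a v = v := by
  rw [symOn_apply, sum_congr rfl h, sum_const, card_permsOn, ← Nat.cast_smul_eq_nsmul F,
    smul_smul, inv_mul_cancel₀ (Nat.cast_ne_zero.2 (#a).factorial_ne_zero), one_smul]

theorem altOn_eq_self (h : ∀ σ ∈ permsOn n a, permMap F H n σ v = (Perm.sign σ : F) • v) :
    altOn F H n a v = v := by
  have h' : ∀ σ ∈ permsOn n a, (Perm.sign σ : F) • permMap F H n σ v = v := fun σ hσ => by
    rw [h σ hσ, smul_smul, sign_cast_mul_self, one_smul]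
  rw [altOn_apply, sum_congr rfl h', sum_const, card_permsOn, ← Nat.cast_smul_eq_nsmul F,
    smul_smul, inv_mul_cancel₀ (Nat.cast_ne_zero.2 (#a).factorial_ne_zero), one_smul]

theorem symOn_symOn_of_subset (h : a ⊆ b) (v : TP F H n) :
    symOn F H n a (symOn F H n b v) = symOn F H n b v :=
  symOn_eq_self fun _ hσ => permMap_symOn (permsOn_mono h hσ) v

theorem altOn_altOn_of_subset (h : a ⊆ b) (v : TP F H n) :
    altOn F H n a (altOn F H n b v) = altOn F H n b v :=
  altOn_eq_self fun _ hσ => permMap_altOn (permsOn_mono h hσ) v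

theorem altOn_eq_zero_of_swap {i j : Fin n} (hi : i ∈ a) (hj : j ∈ a) (hij : i ≠ j)
    (hv : permMap F H n (swap i j) v = v) : altOn F H n a v = 0 := by
  have : IsAddTorsionFree (TP F H n) := .of_isTorsionFree F _
  have h := altOn_permMap (swap_mem_permsOn hi hj) v
  rw [hv, Perm.sign_swap hij, Units.val_neg, Units.val_one, Int.cast_neg, Int.cast_one,
    neg_one_smul] at h
  exact self_eq_neg.1 h

theorem symOn_eq_zero_of_swap {i j : Fin n} (hi : i ∈ a) (hj : j ∈ a)
    (hv : permMap F H n (swap i j) v = -v) : symOn F H n a v = 0 := by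
  have : IsAddTorsionFree (TP F H n) := .of_isTorsionFree F _
  have h := symOn_permMap (swap_mem_permsOn hi hj) v
  rw [hv, map_neg] at h
  exact self_eq_neg.1 h.symm

theorem card_add_one_smul_symOn_insert {i : Fin n} (hi : i ∉ a) (v : TP F H n) :
    ((#a : F) + 1) • symOn F H n (insert i a) v =
      ∑ l ∈ insert i a, symOn F H n a (permMap F H n (swap l i) v) := by
  have hk : (#a : F) + 1 ≠ 0 := by exact_mod_cast (#a).succ_ne_zero
  rw [symOn_apply, sum_permsOn_insert hi, smul_smul, card_insert_of_notMem hi, Nat.factorial_succ,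
    Nat.cast_mul, Nat.cast_succ, mul_inv, ← mul_assoc, mul_inv_cancel₀ hk, one_mul, smul_sum]
  simp only [symOn_apply, permMap_mul]

theorem card_add_one_smul_altOn_insert {i : Fin n} (hi : i ∉ a) (v : TP F H n) :
    ((#a : F) + 1) • altOn F H n (insert i a) v =
      ∑ l ∈ insert i a,
        (Perm.sign (swap l i) : F) • altOn F H n a (permMap F H n (swap l i) v) := by
  have hk : (#a : F) + 1 ≠ 0 := by exact_mod_cast (#a).succ_ne_zero
  rw [altOn_apply, sum_permsOn_insert hi, smul_smul, card_insert_of_notMem hi, Nat.factorial_succ,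
    Nat.cast_mul, Nat.cast_succ, mul_inv, ← mul_assoc, mul_inv_cancel₀ hk, one_mul, smul_sum]
  refine sum_congr rfl fun l _ => ?_
  rw [altOn_apply, smul_comm]
  congr 1
  rw [smul_sum]
  refine sum_congr rfl fun π _ => ?_
  rw [permMap_mul, smul_smul, Perm.sign_mul, Units.val_mul, Int.cast_mul, mul_comm]

end Symmetrization

section Hgen

variable {F H} {n m : ℕ} {a b c : Finset (Fin n)} {σ : Perm (Fin n)} {v : TP F H n}

theorem mem_Hgen_iff : v ∈ Hgen F H n a ↔ symOn F H n a v = v ∧ altOn F H n aᶜ v = v := by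
  constructor
  · rintro ⟨w, rfl⟩
    rw [LinearMap.comp_apply, symOn_symOn_of_subset subset_rfl,
      ← symOn_altOn_comm disjoint_compl_right, altOn_altOn_of_subset subset_rfl]
    exact ⟨rfl, rfl⟩
  · rintro ⟨hs, ha⟩
    exact ⟨v, by rw [LinearMap.comp_apply, ha, hs]⟩

theorem permMap_eq_self_of_mem_Hgen (hv : v ∈ Hgen F H n a) (hσ : σ ∈ permsOn n a) :
    permMap F H n σ v = v := by
  rw [← (mem_Hgen_iff.1 hv).1, permMap_symOn hσ]

theorem permMap_eq_sign_smul_of_mem_Hgen (hv : v ∈ Hgen F H n a) (hσ : σ ∈ permsOn n aᶜ) :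
    permMap F H n σ v = (Perm.sign σ : F) • v := by
  rw [← (mem_Hgen_iff.1 hv).2, permMap_altOn hσ]

omit [CharZero F] in
theorem symOn_mem_Hgen (hv : altOn F H n aᶜ v = v) : symOn F H n a v ∈ Hgen F H n a :=
  ⟨v, by rw [LinearMap.comp_apply, hv]⟩

omit [CharZero F] in
theorem altOn_mem_Hgen (hv : symOn F H n a v = v) : altOn F H n aᶜ v ∈ Hgen F H n a :=
  ⟨v, by rw [LinearMap.comp_apply, symOn_altOn_comm disjoint_compl_right, hv]⟩

theorem symOn_mem_Hgen_of_subset (hab : a ⊆ b) (hv : v ∈ Hgen F H n a) :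
    symOn F H n b v ∈ Hgen F H n b :=
  symOn_mem_Hgen <| by
    rw [← (mem_Hgen_iff.1 hv).2, altOn_altOn_of_subset (compl_subset_compl.2 hab)]

theorem altOn_mem_Hgen_of_subset (hac : aᶜ ⊆ c) (hv : v ∈ Hgen F H n a) :
    altOn F H n c v ∈ Hgen F H n cᶜ := by
  have hs : symOn F H n cᶜ v = v := by
    rw [← (mem_Hgen_iff.1 hv).1, symOn_symOn_of_subset (compl_le_iff_compl_le.1 hac)]
  simpa using altOn_mem_Hgen hs

theorem permMap_mem_Hgen (σ : Perm (Fin n)) (hv : v ∈ Hgen F H n a) :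
    permMap F H n σ v ∈ Hgen F H n (a.image σ) := by
  obtain ⟨hs, ha⟩ := mem_Hgen_iff.1 hv
  rw [mem_Hgen_iff, compl_image_perm, ← permMap_symOn_eq, ← permMap_altOn_eq, hs, ha]
  exact ⟨rfl, rfl⟩

omit [CharZero F] in
theorem Hgen_le_HmixSpan (ha : #a = m) : Hgen F H n a ≤ HmixSpan F H n m :=
  le_iSup₂ (f := fun b (_ : b ∈ {b : Finset (Fin n) | #b = m}) => Hgen F H n b) a ha

theorem permMap_mem_HmixSpan (σ : Perm (Fin n)) (hv : v ∈ HmixSpan F H n m) :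
    permMap F H n σ v ∈ HmixSpan F H n m := by
  suffices HmixSpan F H n m ≤ (HmixSpan F H n m).comap (permMap F H n σ) from this hv
  exact iSup₂_le fun b (hb : #b = m) w hw =>
    Hgen_le_HmixSpan ((card_image_of_injective b σ.injective).trans hb) (permMap_mem_Hgen σ hw)

theorem symOn_mem_HmixSpan (c : Finset (Fin n)) (hv : v ∈ HmixSpan F H n m) :
    symOn F H n c v ∈ HmixSpan F H n m := by
  rw [symOn_apply]
  exact Submodule.smul_mem _ _ (Submodule.sum_mem _ fun σ _ => permMap_mem_HmixSpan σ hv)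

theorem altOn_mem_HmixSpan (c : Finset (Fin n)) (hv : v ∈ HmixSpan F H n m) :
    altOn F H n c v ∈ HmixSpan F H n m := by
  rw [altOn_apply]
  exact Submodule.smul_mem _ _ (Submodule.sum_mem _ fun σ _ =>
    Submodule.smul_mem _ _ (permMap_mem_HmixSpan σ hv))

theorem altOn_eq_zero_of_mem_HmixSpan (hc : n + 1 < m + #c) (hv : v ∈ HmixSpan F H n m) :
    altOn F H n c v = 0 := by
  suffices HmixSpan F H n m ≤ LinearMap.ker (altOn F H n c) from this hv
  refine iSup₂_le fun b (hb : #b = m) w hw => ?_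
  obtain ⟨i, hi, j, hj, hij⟩ := one_lt_card.1 (one_lt_card_inter (hb ▸ hc))
  rw [mem_inter] at hi hj
  exact altOn_eq_zero_of_swap hi.2 hj.2 hij
    (permMap_eq_self_of_mem_Hgen hw (swap_mem_permsOn hi.1 hj.1))

theorem symOn_eq_zero_of_mem_HmixSpan (hc : m + 1 < #c) (hv : v ∈ HmixSpan F H n m) :
    symOn F H n c v = 0 := by
  suffices HmixSpan F H n m ≤ LinearMap.ker (symOn F H n c) from this hv
  refine iSup₂_le fun b (hb : #b = m) w hw => ?_
  have hbc : n + 1 < #bᶜ + #c := by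
    have := card_le_univ b
    rw [card_compl, Fintype.card_fin] at *
    omega
  obtain ⟨i, hi, j, hj, hij⟩ := one_lt_card.1 (one_lt_card_inter hbc)
  rw [mem_inter] at hi hj
  refine symOn_eq_zero_of_swap hi.2 hj.2 ?_
  rw [permMap_eq_sign_smul_of_mem_Hgen hw (swap_mem_permsOn hi.1 hj.1), Perm.sign_swap hij]
  simp

end Hgen

section Splitting

variable {F H} {n : ℕ} {a : Finset (Fin n)} {σ : Perm (Fin n)} {i j l : Fin n} {v : TP F H n}

omit [CharZero F] in
theorem symOn_altOn_permMap_of_mem_permsOn (hσ : σ ∈ permsOn n a) (v : TP F H n) :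
    symOn F H n a (altOn F H n aᶜ (permMap F H n σ v)) = symOn F H n a (altOn F H n aᶜ v) := by
  rw [← permMap_altOn_of_disjoint disjoint_compl_right hσ, symOn_permMap hσ]

omit [CharZero F] in
theorem symOn_altOn_permMap_of_mem_permsOn_compl (hσ : σ ∈ permsOn n aᶜ) (v : TP F H n) :
    symOn F H n a (altOn F H n aᶜ (permMap F H n σ v)) =
      (Perm.sign σ : F) • symOn F H n a (altOn F H n aᶜ v) := by
  rw [altOn_permMap hσ, map_smul]

theorem symOn_altOn_permMap_swap_of_mem (hv : v ∈ Hgen F H n a) (hi : i ∉ a) (hj : j ∈ a)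
    (hl : l ∈ a) :
    symOn F H n a (altOn F H n aᶜ (permMap F H n (swap l i) v)) =
      symOn F H n a (altOn F H n aᶜ (permMap F H n (swap i j) v)) := by
  rcases eq_or_ne l j with rfl | hlj
  · rw [swap_comm]
  have hπ := swap_mem_permsOn hj hl
  have hij : i ≠ j := fun h => hi (h ▸ hj)
  have hil : i ≠ l := fun h => hi (h ▸ hl)
  rw [← swap_mul_swap_mul_swap hij hil, permMap_mul,
    permMap_mul, permMap_eq_self_of_mem_Hgen hv hπ, symOn_altOn_permMap_of_mem_permsOn hπ]

theorem symOn_altOn_permMap_swap_of_notMem (hv : v ∈ Hgen F H n a) (hi : i ∉ a) (hj : j ∈ a)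
    (hl : l ∉ a) :
    symOn F H n a (altOn F H n aᶜ (permMap F H n (swap l j) v)) =
      symOn F H n a (altOn F H n aᶜ (permMap F H n (swap i j) v)) := by
  rcases eq_or_ne l i with rfl | hli
  · rfl
  have hπ := swap_mem_permsOn (mem_compl.2 hi) (mem_compl.2 hl)
  have hji : j ≠ i := fun h => hi (h ▸ hj)
  have hjl : j ≠ l := fun h => hl (h ▸ hj)
  rw [← swap_mul_swap_mul_swap hji hjl, permMap_mul,
    permMap_mul, permMap_eq_sign_smul_of_mem_Hgen hv hπ]
  simp only [map_smul]
  rw [symOn_altOn_permMap_of_mem_permsOn_compl hπ, smul_smul, sign_cast_mul_self, one_smul,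
    swap_comm]

theorem card_add_one_smul_altOn_symOn_insert (hv : v ∈ Hgen F H n a) (hi : i ∉ a) (hj : j ∈ a) :
    ((#a : F) + 1) • altOn F H n aᶜ (symOn F H n (insert i a) v) =
      v + (#a : F) • symOn F H n a (altOn F H n aᶜ (permMap F H n (swap i j) v)) := by
  rw [← map_smul, card_add_one_smul_symOn_insert hi, map_sum]
  simp only [← symOn_altOn_comm disjoint_compl_right]
  rw [sum_insert hi, swap_self, ← Perm.one_def, permMap_one, (mem_Hgen_iff.1 hv).2,
    (mem_Hgen_iff.1 hv).1, sum_congr rfl fun l hl => symOn_altOn_permMap_swap_of_mem hv hi hj hl,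
    sum_const, ← Nat.cast_smul_eq_nsmul F]

theorem card_add_one_smul_symOn_altOn_insert (hv : v ∈ Hgen F H n a) (hi : i ∉ a) (hj : j ∈ a) :
    ((#aᶜ : F) + 1) • symOn F H n a (altOn F H n (insert j aᶜ) v) =
      v - (#aᶜ : F) • symOn F H n a (altOn F H n aᶜ (permMap F H n (swap i j) v)) := by
  have hj' : j ∉ aᶜ := notMem_compl.2 hj
  have hterm : ∀ l ∈ aᶜ, symOn F H n a ((Perm.sign (swap l j) : F) •
      altOn F H n aᶜ (permMap F H n (swap l j) v)) =
        -symOn F H n a (altOn F H n aᶜ (permMap F H n (swap i j) v)) := fun l hl => by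
    have hlj : l ≠ j := fun h => hj' (h ▸ hl)
    rw [Perm.sign_swap hlj, map_smul,
      symOn_altOn_permMap_swap_of_notMem hv hi hj (mem_compl.1 hl)]
    simp
  rw [← map_smul, card_add_one_smul_altOn_insert hj', map_sum, sum_insert hj', swap_self,
    ← Perm.one_def, permMap_one, Perm.sign_one, Units.val_one, Int.cast_one, one_smul,
    (mem_Hgen_iff.1 hv).2, (mem_Hgen_iff.1 hv).1, sum_congr rfl hterm, sum_const,
    ← Nat.cast_smul_eq_nsmul F, smul_neg, sub_eq_add_neg]

theorem natCast_smul_eq_of_mem_Hgen (hv : v ∈ Hgen F H n a) (hi : i ∉ a) (hj : j ∈ a) :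
    (n : F) • v =
      ((#aᶜ : F) * (#a + 1)) • altOn F H n aᶜ (symOn F H n (insert i a) v) +
        ((#a : F) * (#aᶜ + 1)) • symOn F H n a (altOn F H n (insert j aᶜ) v) := by
  have hn : (n : F) = #a + #aᶜ := by
    exact_mod_cast ((card_add_card_compl a).trans (Fintype.card_fin n)).symm
  rw [mul_smul, mul_smul, card_add_one_smul_altOn_symOn_insert hv hi hj,
    card_add_one_smul_symOn_altOn_insert hv hi hj, hn]
  module

theorem altOn_symOn_insert_mem (hv : v ∈ Hgen F H n a) (hi : i ∉ a) :
    altOn F H n aᶜ (symOn F H n (insert i a) v) ∈ Hgen F H n a ⊓ HmixSpan F H n (#a + 1) :=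
  ⟨altOn_mem_Hgen (symOn_symOn_of_subset (subset_insert i a) v),
    altOn_mem_HmixSpan _ (Hgen_le_HmixSpan (card_insert_of_notMem hi)
      (symOn_mem_Hgen_of_subset (subset_insert i a) hv))⟩

theorem symOn_altOn_insert_mem (hv : v ∈ Hgen F H n a) (hj : j ∈ a) :
    symOn F H n a (altOn F H n (insert j aᶜ) v) ∈ Hgen F H n a ⊓ HmixSpan F H n (#a - 1) := by
  have hcard : #(insert j aᶜ)ᶜ = #a - 1 := by
    rw [compl_insert, compl_compl, card_erase_of_mem hj]
  exact ⟨symOn_mem_Hgen (altOn_altOn_of_subset (subset_insert j aᶜ) v),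
    symOn_mem_HmixSpan _
      (Hgen_le_HmixSpan hcard (altOn_mem_Hgen_of_subset (subset_insert j aᶜ) hv))⟩

theorem disjoint_Hgen_inf_HmixSpan (ha : a.Nonempty) (hac : aᶜ.Nonempty) :
    Disjoint (Hgen F H n a ⊓ HmixSpan F H n (#a + 1)) (Hgen F H n a ⊓ HmixSpan F H n (#a - 1)) := by
  obtain ⟨j, hj⟩ := ha
  obtain ⟨i, hi⟩ := hac
  rw [mem_compl] at hi
  have hcard := card_add_card_compl a
  have hpos := card_pos.2 ⟨j, hj⟩
  rw [Fintype.card_fin] at hcard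
  refine Submodule.disjoint_def.2 fun v ⟨hv, hplus⟩ ⟨_, hminus⟩ => ?_
  have hS : symOn F H n (insert i a) v = 0 :=
    symOn_eq_zero_of_mem_HmixSpan (by rw [card_insert_of_notMem hi]; omega) hminus
  have hA : altOn F H n (insert j aᶜ) v = 0 :=
    altOn_eq_zero_of_mem_HmixSpan (by rw [card_insert_of_notMem (notMem_compl.2 hj)]; omega)
      hplus
  have h := natCast_smul_eq_of_mem_Hgen hv hi hj
  rw [hS, hA, map_zero, map_zero, smul_zero, smul_zero, add_zero] at h
  exact (smul_eq_zero.1 h).resolve_left (Nat.cast_ne_zero.2 (Fin.pos j).ne')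

theorem Hgen_inf_HmixSpan_sup (ha : a.Nonempty) (hac : aᶜ.Nonempty) :
    Hgen F H n a ⊓ HmixSpan F H n (#a + 1) ⊔ Hgen F H n a ⊓ HmixSpan F H n (#a - 1) =
      Hgen F H n a := by
  obtain ⟨j, hj⟩ := ha
  obtain ⟨i, hi⟩ := hac
  rw [mem_compl] at hi
  refine le_antisymm (sup_le inf_le_left inf_le_left) fun v hv => ?_
  rw [← inv_smul_smul₀ (Nat.cast_ne_zero.2 (Fin.pos j).ne' : (n : F) ≠ 0) v,
    natCast_smul_eq_of_mem_Hgen hv hi hj]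
  exact Submodule.smul_mem _ _ (Submodule.add_mem_sup
    (Submodule.smul_mem _ _ (altOn_symOn_insert_mem hv hi))
    (Submodule.smul_mem _ _ (symOn_altOn_insert_mem hv hj)))

end Splitting

/-- Splitting of the Boson–Fermion component: for `k ≥ 1`, `q ≥ 1`,
`n = k + q`, the subspace `H_{k,q}` of `H^{⊗n}` decomposes as the internal direct sum
`H_{k,q} = H_{k,q}^+ ⊕ H_{k,q}^-`, where `H_{k,q}^+ = H_{k,q} ∩ H^{⊙[k+1],∧[q-1]}` and
`H_{k,q}^- = H_{k,q} ∩ H^{⊙[k-1],∧[q+1]}`. -/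
theorem Hmix_direct_sum (k q : ℕ) (hk : 1 ≤ k) (hq : 1 ≤ q) :
    (Hmix F H (k + q) k ⊓ HmixSpan F H (k + q) (k + 1)) ⊓
        (Hmix F H (k + q) k ⊓ HmixSpan F H (k + q) (k - 1)) = ⊥ ∧
    (Hmix F H (k + q) k ⊓ HmixSpan F H (k + q) (k + 1)) ⊔
        (Hmix F H (k + q) k ⊓ HmixSpan F H (k + q) (k - 1)) = Hmix F H (k + q) k := by
  have hcard : #(firstSet (k + q) k) = k := by
    rw [firstSet, Fin.card_filter_val_lt, min_eq_right (by omega)]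
  have ha : (firstSet (k + q) k).Nonempty := ⟨⟨k - 1, by omega⟩, by simp [firstSet]; omega⟩
  have hac : (firstSet (k + q) k)ᶜ.Nonempty := ⟨⟨k, by omega⟩, by simp [firstSet]⟩
  have hdisj := disjoint_iff.1 (disjoint_Hgen_inf_HmixSpan (F := F) (H := H) ha hac)
  have hsup := Hgen_inf_HmixSpan_sup (F := F) (H := H) ha hac
  rw [hcard] at hdisj hsup
  exact ⟨hdisj, hsup⟩

end
end

section
/- (Decomposition for an arbitrary position set) For all natural numbers k ≥ 1 and q ≥ 1 with n = k + q and every k-element subset a ⊆ {1,…,n}, the subspace H^{⊙a,∧a^c} of H^{⊗n} decomposes as the internal direct sum H^{⊙a,∧a^c} = (H^{⊙a,∧a^c} ∩ H^{⊙[k+1],∧[q−1]}) ⊕ (H^{⊙a,∧a^c} ∩ H^{⊙[k−1],∧[q+1]}). -/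
open scoped BigOperators

noncomputable section

variable (F : Type*) [Field F] [CharZero F] (H : Type*) [AddCommGroup H] [Module F H]

namespace StatementAux

open Equiv Finset

variable {n : ℕ}
set_option linter.unusedSectionVars false

theorem permMap_mul (σ τ : Equiv.Perm (Fin n)) :
    permMap F H n (σ * τ) = permMap F H n σ ∘ₗ permMap F H n τ := by
  unfold permMap
  rw [show ((σ * τ : Equiv.Perm (Fin n)) : Fin n ≃ Fin n) = Equiv.trans τ σ from rfl]
  rw [← PiTensorProduct.reindex_trans]
  rfl

theorem permMap_mul_apply (σ τ : Equiv.Perm (Fin n)) (x : TP F H n) :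
    permMap F H n (σ * τ) x = permMap F H n σ (permMap F H n τ x) := by
  rw [permMap_mul]; rfl

theorem mem_permsOn {a : Finset (Fin n)} {σ : Equiv.Perm (Fin n)} :
    σ ∈ permsOn n a ↔ ∀ i, i ∉ a → σ i = i := by
  simp [permsOn]

theorem perm_mem {a : Finset (Fin n)} {σ : Equiv.Perm (Fin n)} (hσ : σ ∈ permsOn n a)
    {i : Fin n} (hi : i ∈ a) : σ i ∈ a := by
  by_contra hmem
  have h1 := mem_permsOn.1 hσ (σ i) hmem
  have h2 : σ i = i := σ.injective h1
  exact hmem (by rw [h2]; exact hi)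

theorem one_mem_permsOn (a : Finset (Fin n)) : (1 : Equiv.Perm (Fin n)) ∈ permsOn n a :=
  mem_permsOn.2 fun _ _ => rfl

theorem mul_mem_permsOn {a : Finset (Fin n)} {σ τ : Equiv.Perm (Fin n)}
    (hσ : σ ∈ permsOn n a) (hτ : τ ∈ permsOn n a) : σ * τ ∈ permsOn n a :=
  mem_permsOn.2 fun i hi => by
    simp [Equiv.Perm.mul_apply, mem_permsOn.1 hτ i hi, mem_permsOn.1 hσ i hi]

theorem permsOn_mono {a b : Finset (Fin n)} (hab : a ⊆ b) : permsOn n a ⊆ permsOn n b :=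
  fun σ hσ => mem_permsOn.2 fun i hi => mem_permsOn.1 hσ i (fun h => hi (hab h))

theorem card_permsOn (a : Finset (Fin n)) : (permsOn n a).card = a.card.factorial := by
  classical
  have h1 : (permsOn n a).card
      = Fintype.card {σ : Equiv.Perm (Fin n) // ∀ i, ¬ (i ∈ a) → σ i = i} :=
    (Fintype.card_subtype _).symm
  rw [h1, Fintype.card_congr (Equiv.Perm.subtypeEquivSubtypePerm (· ∈ a)).symm,
    Fintype.card_perm, Fintype.card_coe]


theorem symOn_apply (a : Finset (Fin n)) (x : TP F H n) :
    symOn F H n a x = (a.card.factorial : F)⁻¹ • ∑ σ ∈ permsOn n a, permMap F H n σ x := by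
  simp [symOn, LinearMap.sum_apply]

theorem altOn_apply (a : Finset (Fin n)) (x : TP F H n) :
    altOn F H n a x = (a.card.factorial : F)⁻¹ •
      ∑ σ ∈ permsOn n a, (Equiv.Perm.sign σ : ℤ) • permMap F H n σ x := by
  simp [altOn, LinearMap.sum_apply]

theorem inv_mem_permsOn {a : Finset (Fin n)} {τ : Equiv.Perm (Fin n)} (hτ : τ ∈ permsOn n a) :
    τ⁻¹ ∈ permsOn n a :=
  mem_permsOn.2 fun i hi =>
    Equiv.Perm.inv_eq_iff_eq.2 (mem_permsOn.1 hτ i hi).symm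

theorem sign_mul_sign_mul (σ τ : Equiv.Perm (Fin n)) :
    ((Equiv.Perm.sign τ : ℤ)) * ((Equiv.Perm.sign (σ * τ) : ℤ)) = (Equiv.Perm.sign σ : ℤ) := by
  rw [← Units.val_mul]
  congr 1
  rw [map_mul, mul_comm, mul_assoc, Int.units_mul_self, mul_one]

/-- right absorption (pointwise) for `symOn`. -/
theorem symOn_perm {a : Finset (Fin n)} {τ : Equiv.Perm (Fin n)} (hτ : τ ∈ permsOn n a)
    (x : TP F H n) : symOn F H n a (permMap F H n τ x) = symOn F H n a x := by
  rw [symOn_apply, symOn_apply]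
  congr 1
  refine Finset.sum_nbij' (fun σ => σ * τ) (fun σ => σ * τ⁻¹) ?_ ?_ ?_ ?_ ?_
  · intro σ hσ; exact mul_mem_permsOn hσ hτ
  · intro σ hσ; exact mul_mem_permsOn hσ (inv_mem_permsOn hτ)
  · intro σ _; group
  · intro σ _; group
  · intro σ _; exact (permMap_mul_apply F H σ τ x).symm

/-- left absorption (pointwise) for `symOn`. -/
theorem perm_symOn {a : Finset (Fin n)} {τ : Equiv.Perm (Fin n)} (hτ : τ ∈ permsOn n a)
    (x : TP F H n) : permMap F H n τ (symOn F H n a x) = symOn F H n a x := by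
  rw [symOn_apply, map_smul, map_sum]
  congr 1
  refine Finset.sum_nbij' (fun σ => τ * σ) (fun σ => τ⁻¹ * σ) ?_ ?_ ?_ ?_ ?_
  · intro σ hσ; exact mul_mem_permsOn hτ hσ
  · intro σ hσ; exact mul_mem_permsOn (inv_mem_permsOn hτ) hσ
  · intro σ _; group
  · intro σ _; group
  · intro σ _; exact (permMap_mul_apply F H τ σ x).symm

/-- sign of a permutation, as an element of `F`. -/
def sgn (σ : Equiv.Perm (Fin n)) : F := ((Equiv.Perm.sign σ : ℤ) : F)

theorem zsmul_eq_sgn_smul (σ : Equiv.Perm (Fin n)) (v : TP F H n) :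
    (Equiv.Perm.sign σ : ℤ) • v = sgn F σ • v := (Int.cast_smul_eq_zsmul F _ v).symm

theorem sgn_mul (σ τ : Equiv.Perm (Fin n)) :
    sgn F (σ * τ) = sgn F σ * sgn F τ := by
  unfold sgn
  rw [← Int.cast_mul, ← Units.val_mul, ← map_mul]

theorem sgn_sq (σ : Equiv.Perm (Fin n)) : sgn F σ * sgn F σ = 1 := by
  unfold sgn
  rw [← Int.cast_mul, ← Units.val_mul, Int.units_mul_self, Units.val_one, Int.cast_one]

theorem altOn_apply' (a : Finset (Fin n)) (x : TP F H n) :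
    altOn F H n a x = (a.card.factorial : F)⁻¹ •
      ∑ σ ∈ permsOn n a, sgn F σ • permMap F H n σ x := by
  rw [altOn_apply]
  simp only [zsmul_eq_sgn_smul F H]

/-- right absorption (pointwise) for `altOn`. -/
theorem altOn_perm {a : Finset (Fin n)} {τ : Equiv.Perm (Fin n)} (hτ : τ ∈ permsOn n a)
    (x : TP F H n) :
    altOn F H n a (permMap F H n τ x) = sgn F τ • altOn F H n a x := by
  have hsum : ∑ σ ∈ permsOn n a, sgn F σ • permMap F H n σ (permMap F H n τ x)
      = sgn F τ • ∑ σ ∈ permsOn n a, sgn F σ • permMap F H n σ x := by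
    rw [Finset.smul_sum]
    refine Finset.sum_nbij' (fun σ => σ * τ) (fun σ => σ * τ⁻¹) ?_ ?_ ?_ ?_ ?_
    · intro σ hσ; exact mul_mem_permsOn hσ hτ
    · intro σ hσ; exact mul_mem_permsOn hσ (inv_mem_permsOn hτ)
    · intro σ _; group
    · intro σ _; group
    · intro σ _
      rw [← permMap_mul_apply, smul_smul, sgn_mul, mul_comm (sgn F σ) (sgn F τ),
        ← mul_assoc, sgn_sq, one_mul]
  rw [altOn_apply', altOn_apply', hsum, smul_comm]

/-- left absorption (pointwise) for `altOn`. -/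
theorem perm_altOn {a : Finset (Fin n)} {τ : Equiv.Perm (Fin n)} (hτ : τ ∈ permsOn n a)
    (x : TP F H n) :
    permMap F H n τ (altOn F H n a x) = sgn F τ • altOn F H n a x := by
  have hsum : ∑ σ ∈ permsOn n a, permMap F H n τ (sgn F σ • permMap F H n σ x)
      = sgn F τ • ∑ σ ∈ permsOn n a, sgn F σ • permMap F H n σ x := by
    rw [Finset.smul_sum]
    refine Finset.sum_nbij' (fun σ => τ * σ) (fun σ => τ⁻¹ * σ) ?_ ?_ ?_ ?_ ?_
    · intro σ hσ; exact mul_mem_permsOn hτ hσ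
    · intro σ hσ; exact mul_mem_permsOn (inv_mem_permsOn hτ) hσ
    · intro σ _; group
    · intro σ _; group
    · intro σ _
      rw [map_smul, ← permMap_mul_apply, smul_smul, sgn_mul, ← mul_assoc, sgn_sq, one_mul]
  rw [altOn_apply', map_smul, map_sum, hsum, smul_comm]


theorem permsOn_commute {a b : Finset (Fin n)} (hd : Disjoint a b) {σ τ : Equiv.Perm (Fin n)}
    (hσ : σ ∈ permsOn n a) (hτ : τ ∈ permsOn n b) : σ * τ = τ * σ := by
  ext i
  simp only [Equiv.Perm.coe_mul, Function.comp_apply]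
  by_cases hia : i ∈ a
  · have hib : i ∉ b := fun hb => (Finset.disjoint_left.1 hd hia) hb
    have h1 : τ i = i := mem_permsOn.1 hτ i hib
    have h2 : σ i ∈ a := perm_mem hσ hia
    have h3 : τ (σ i) = σ i := mem_permsOn.1 hτ (σ i)
      (fun hb => (Finset.disjoint_left.1 hd h2) hb)
    rw [h1, h3]
  · by_cases hib : i ∈ b
    · have h1 : σ i = i := mem_permsOn.1 hσ i hia
      have h2 : τ i ∈ b := perm_mem hτ hib
      have h3 : σ (τ i) = τ i := mem_permsOn.1 hσ (τ i) (Finset.disjoint_right.1 hd h2)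
      rw [h1, h3]
    · simp only [mem_permsOn.1 hσ i hia, mem_permsOn.1 hτ i hib]

theorem perm_symOn_comm {a b : Finset (Fin n)} (hd : Disjoint a b) {τ : Equiv.Perm (Fin n)}
    (hτ : τ ∈ permsOn n a) (x : TP F H n) :
    permMap F H n τ (symOn F H n b x) = symOn F H n b (permMap F H n τ x) := by
  rw [symOn_apply, symOn_apply, map_smul, map_sum]
  congr 1
  refine Finset.sum_congr rfl fun σ hσ => ?_
  rw [← permMap_mul_apply, ← permMap_mul_apply, permsOn_commute hd hτ hσ]

theorem perm_altOn_comm {a b : Finset (Fin n)} (hd : Disjoint a b) {τ : Equiv.Perm (Fin n)}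
    (hτ : τ ∈ permsOn n a) (x : TP F H n) :
    permMap F H n τ (altOn F H n b x) = altOn F H n b (permMap F H n τ x) := by
  rw [altOn_apply', altOn_apply', map_smul, map_sum]
  congr 1
  refine Finset.sum_congr rfl fun σ hσ => ?_
  rw [map_smul, ← permMap_mul_apply, ← permMap_mul_apply, permsOn_commute hd hτ hσ]

theorem symOn_of_fixed {a : Finset (Fin n)} {v : TP F H n}
    (h : ∀ σ ∈ permsOn n a, permMap F H n σ v = v) : symOn F H n a v = v := by
  rw [symOn_apply, Finset.sum_congr rfl h, Finset.sum_const, card_permsOn,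
    ← Nat.cast_smul_eq_nsmul (R := F), smul_smul,
    inv_mul_cancel₀ (by exact_mod_cast (Nat.cast_ne_zero (R := F)).2 a.card.factorial_ne_zero),
    one_smul]

theorem altOn_of_skewFixed {a : Finset (Fin n)} {v : TP F H n}
    (h : ∀ σ ∈ permsOn n a, permMap F H n σ v = sgn F σ • v) : altOn F H n a v = v := by
  rw [altOn_apply']
  have h2 : ∀ σ ∈ permsOn n a, sgn F σ • permMap F H n σ v = v := by
    intro σ hσ
    rw [h σ hσ, smul_smul, sgn_sq, one_smul]
  rw [Finset.sum_congr rfl h2, Finset.sum_const, card_permsOn,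
    ← Nat.cast_smul_eq_nsmul (R := F), smul_smul,
    inv_mul_cancel₀ (by exact_mod_cast (Nat.cast_ne_zero (R := F)).2 a.card.factorial_ne_zero),
    one_smul]

theorem mem_Hgen {a : Finset (Fin n)} {v : TP F H n} :
    v ∈ Hgen F H n a ↔
      (∀ σ ∈ permsOn n a, permMap F H n σ v = v) ∧
      (∀ σ ∈ permsOn n aᶜ, permMap F H n σ v = sgn F σ • v) := by
  constructor
  · rintro ⟨w, rfl⟩
    constructor
    · intro σ hσ
      exact perm_symOn F H hσ _
    · intro σ hσ
      rw [LinearMap.comp_apply, perm_symOn_comm F H disjoint_compl_left hσ,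
        perm_altOn F H hσ, map_smul]
  · rintro ⟨h1, h2⟩
    refine ⟨v, ?_⟩
    rw [LinearMap.comp_apply, altOn_of_skewFixed F H h2, symOn_of_fixed F H h1]


theorem permMap_one (x : TP F H n) : permMap F H n 1 x = x := by
  unfold permMap
  rw [show ((1 : Equiv.Perm (Fin n)) : Fin n ≃ Fin n) = Equiv.refl (Fin n) from rfl,
    PiTensorProduct.reindex_refl]
  rfl

theorem sum_permsOn_insert {M : Type*} [AddCommMonoid M] {a : Finset (Fin n)} {j : Fin n}
    (hj : j ∉ a) (f : Equiv.Perm (Fin n) → M) :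
    ∑ g ∈ permsOn n (insert j a), f g
      = ∑ l ∈ insert j a, ∑ σ ∈ permsOn n a, f (Equiv.swap j l * σ) := by
  rw [← Finset.sum_product']
  refine (Finset.sum_nbij' (fun p => Equiv.swap j p.1 * p.2)
    (fun g => (g j, Equiv.swap j (g j) * g)) ?_ ?_ ?_ ?_ ?_).symm
  · rintro ⟨l, σ⟩ hp
    rw [Finset.mem_product] at hp
    obtain ⟨hl, hσ⟩ := hp
    refine mem_permsOn.2 fun x hx => ?_
    have hxj : x ≠ j := fun h => hx (h ▸ Finset.mem_insert_self j a)
    have hxl : x ≠ l := fun h => hx (h ▸ hl)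
    have hxa : x ∉ a := fun h => hx (Finset.mem_insert_of_mem h)
    simp only [Equiv.Perm.mul_apply, mem_permsOn.1 hσ x hxa,
      Equiv.swap_apply_of_ne_of_ne hxj hxl]
  · intro g hg
    rw [Finset.mem_product]
    refine ⟨perm_mem hg (Finset.mem_insert_self j a), mem_permsOn.2 fun x hx => ?_⟩
    by_cases hxj : x = j
    · subst hxj
      simp only [Equiv.Perm.mul_apply, Equiv.swap_apply_right]
    · have hxi : x ∉ insert j a := by
        simp only [Finset.mem_insert, not_or]
        exact ⟨hxj, hx⟩
      have hgx : g x = x := mem_permsOn.1 hg x hxi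
      have hxgj : x ≠ g j := by
        intro h
        have : g x = g j := by rw [hgx, h]
        exact hxj (g.injective this)
      simp only [Equiv.Perm.mul_apply, hgx,
        Equiv.swap_apply_of_ne_of_ne hxj hxgj]
  · rintro ⟨l, σ⟩ hp
    rw [Finset.mem_product] at hp
    obtain ⟨hl, hσ⟩ := hp
    have hσj : σ j = j := mem_permsOn.1 hσ j hj
    have h1 : (Equiv.swap j l * σ) j = l := by
      simp only [Equiv.Perm.mul_apply, hσj, Equiv.swap_apply_left]
    refine Prod.ext ?_ ?_
    · exact h1
    · simp only [h1, ← mul_assoc, Equiv.swap_mul_self, one_mul]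
  · intro g hg
    simp only [← mul_assoc, Equiv.swap_mul_self, one_mul]
  · intro p hp
    rfl

/-- Expansion of `symOn (insert j a)` on a vector invariant under `permsOn a`. -/
theorem symOn_insert_eq {a : Finset (Fin n)} {j : Fin n} (hj : j ∉ a) {v : TP F H n}
    (h1 : ∀ σ ∈ permsOn n a, permMap F H n σ v = v) :
    symOn F H n (insert j a) v
      = ((a.card + 1 : ℕ) : F)⁻¹ • ∑ l ∈ insert j a, permMap F H n (Equiv.swap j l) v := by
  rw [symOn_apply, sum_permsOn_insert hj]
  have hinner : ∀ l ∈ insert j a, ∑ σ ∈ permsOn n a, permMap F H n (Equiv.swap j l * σ) v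
      = (a.card.factorial : F) • permMap F H n (Equiv.swap j l) v := by
    intro l _
    rw [Finset.sum_congr rfl fun σ hσ => by
      rw [permMap_mul_apply, h1 σ hσ], Finset.sum_const, card_permsOn,
      ← Nat.cast_smul_eq_nsmul (R := F)]
  rw [Finset.sum_congr rfl hinner, ← Finset.smul_sum, Finset.card_insert_of_notMem hj,
    Nat.factorial_succ, smul_smul]
  congr 1
  rw [Nat.cast_mul]
  rw [mul_inv, mul_assoc,
    inv_mul_cancel₀ ((Nat.cast_ne_zero (R := F)).2 a.card.factorial_ne_zero), mul_one]

/-- Expansion of `altOn (insert j c)` on a vector skew-invariant under `permsOn c`. -/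
theorem altOn_insert_eq {c : Finset (Fin n)} {j : Fin n} (hj : j ∉ c) {v : TP F H n}
    (h2 : ∀ σ ∈ permsOn n c, permMap F H n σ v = sgn F σ • v) :
    altOn F H n (insert j c) v
      = ((c.card + 1 : ℕ) : F)⁻¹ •
          ∑ l ∈ insert j c, sgn F (Equiv.swap j l) • permMap F H n (Equiv.swap j l) v := by
  rw [altOn_apply', sum_permsOn_insert hj]
  have hinner : ∀ l ∈ insert j c,
      ∑ σ ∈ permsOn n c, sgn F (Equiv.swap j l * σ) • permMap F H n (Equiv.swap j l * σ) v
      = (c.card.factorial : F) • (sgn F (Equiv.swap j l) • permMap F H n (Equiv.swap j l) v) := by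
    intro l _
    have hterm : ∀ σ ∈ permsOn n c,
        sgn F (Equiv.swap j l * σ) • permMap F H n (Equiv.swap j l * σ) v
        = sgn F (Equiv.swap j l) • permMap F H n (Equiv.swap j l) v := by
      intro σ hσ
      rw [permMap_mul_apply, h2 σ hσ, map_smul, sgn_mul, mul_smul, smul_comm (sgn F σ),
        smul_smul (sgn F σ), sgn_sq, one_smul]
    rw [Finset.sum_congr rfl hterm, Finset.sum_const, card_permsOn,
      ← Nat.cast_smul_eq_nsmul (R := F)]
  rw [Finset.sum_congr rfl hinner, ← Finset.smul_sum, Finset.card_insert_of_notMem hj,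
    Nat.factorial_succ, smul_smul]
  congr 1
  rw [Nat.cast_mul]
  rw [mul_inv, mul_assoc,
    inv_mul_cancel₀ ((Nat.cast_ne_zero (R := F)).2 c.card.factorial_ne_zero), mul_one]


theorem sgn_one : sgn F (1 : Equiv.Perm (Fin n)) = 1 := by
  unfold sgn
  rw [map_one, Units.val_one, Int.cast_one]

theorem sgn_swap {x y : Fin n} (hxy : x ≠ y) : sgn F (Equiv.swap x y) = -1 := by
  unfold sgn
  rw [Equiv.Perm.sign_swap hxy]
  norm_num

theorem permMap_mem_Hgen_image {a : Finset (Fin n)} (σ : Equiv.Perm (Fin n)) {v : TP F H n}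
    (hv : v ∈ Hgen F H n a) : permMap F H n σ v ∈ Hgen F H n (a.image σ) := by
  rw [mem_Hgen] at hv ⊢
  obtain ⟨h1, h2⟩ := hv
  have key : ∀ τ : Equiv.Perm (Fin n), permMap F H n τ (permMap F H n σ v)
      = permMap F H n σ (permMap F H n (σ⁻¹ * τ * σ) v) := by
    intro τ
    rw [← permMap_mul_apply, ← permMap_mul_apply]
    congr 1
    group
  constructor
  · intro τ hτ
    have hmem : σ⁻¹ * τ * σ ∈ permsOn n a := by
      refine mem_permsOn.2 fun i hi => ?_
      have hσi : σ i ∉ a.image σ := by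
        intro hmem
        obtain ⟨x, hx, hxe⟩ := Finset.mem_image.1 hmem
        exact hi (σ.injective hxe ▸ hx)
      have : τ (σ i) = σ i := mem_permsOn.1 hτ (σ i) hσi
      simp [Equiv.Perm.mul_apply, this]
    rw [key τ, h1 _ hmem]
  · intro τ hτ
    have hmem : σ⁻¹ * τ * σ ∈ permsOn n aᶜ := by
      refine mem_permsOn.2 fun i hi => ?_
      have hia : i ∈ a := by simpa using hi
      have hσi : σ i ∉ (a.image σ)ᶜ := by
        simp only [Finset.mem_compl, not_not]
        exact Finset.mem_image_of_mem σ hia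
      have : τ (σ i) = σ i := mem_permsOn.1 hτ (σ i) hσi
      simp [Equiv.Perm.mul_apply, this]
    have hsgn : sgn F (σ⁻¹ * τ * σ) = sgn F τ := by
      rw [sgn_mul, sgn_mul, mul_comm, ← mul_assoc, ← sgn_mul, mul_inv_cancel, sgn_one, one_mul]
    rw [key τ, h2 _ hmem, hsgn, map_smul]

theorem Hgen_le_HmixSpan {m : ℕ} {a : Finset (Fin n)} (h : a.card = m) :
    Hgen F H n a ≤ HmixSpan F H n m := by
  unfold HmixSpan
  exact le_iSup₂ (f := fun (b : Finset (Fin n)) (_ : b ∈ {b : Finset (Fin n) | b.card = m}) =>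
    Hgen F H n b) a h

theorem permMap_mem_HmixSpan {m : ℕ} (σ : Equiv.Perm (Fin n)) {v : TP F H n}
    (hv : v ∈ HmixSpan F H n m) : permMap F H n σ v ∈ HmixSpan F H n m := by
  have hle : HmixSpan F H n m ≤ Submodule.comap (permMap F H n σ) (HmixSpan F H n m) := by
    unfold HmixSpan
    refine iSup₂_le fun b hb => fun w hw => ?_
    have : permMap F H n σ w ∈ Hgen F H n (b.image σ) := permMap_mem_Hgen_image F H σ hw
    exact Hgen_le_HmixSpan F H (by rw [Finset.card_image_of_injective _ σ.injective]; exact hb)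
      this
  exact hle hv

theorem symOn_mem_HmixSpan {m : ℕ} (a : Finset (Fin n)) {v : TP F H n}
    (hv : v ∈ HmixSpan F H n m) : symOn F H n a v ∈ HmixSpan F H n m := by
  rw [symOn_apply]
  exact Submodule.smul_mem _ _ (Submodule.sum_mem _ fun σ _ => permMap_mem_HmixSpan F H σ hv)

theorem altOn_mem_HmixSpan {m : ℕ} (a : Finset (Fin n)) {v : TP F H n}
    (hv : v ∈ HmixSpan F H n m) : altOn F H n a v ∈ HmixSpan F H n m := by
  rw [altOn_apply']
  exact Submodule.smul_mem _ _ (Submodule.sum_mem _ fun σ _ =>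
    Submodule.smul_mem _ _ (permMap_mem_HmixSpan F H σ hv))

theorem symOn_eq_zero {b c : Finset (Fin n)} {x y : Fin n} (hxb : x ∈ b) (hyb : y ∈ b)
    (hxc : x ∈ c) (hyc : y ∈ c) (hxy : x ≠ y) {v : TP F H n}
    (hv : ∀ σ ∈ permsOn n c, permMap F H n σ v = sgn F σ • v) :
    symOn F H n b v = 0 := by
  have hτb : Equiv.swap x y ∈ permsOn n b := mem_permsOn.2 fun i hi =>
    Equiv.swap_apply_of_ne_of_ne (fun h => hi (h ▸ hxb)) (fun h => hi (h ▸ hyb))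
  have hτc : Equiv.swap x y ∈ permsOn n c := mem_permsOn.2 fun i hi =>
    Equiv.swap_apply_of_ne_of_ne (fun h => hi (h ▸ hxc)) (fun h => hi (h ▸ hyc))
  have h1 : symOn F H n b (permMap F H n (Equiv.swap x y) v) = symOn F H n b v :=
    symOn_perm F H hτb v
  rw [hv _ hτc, sgn_swap F hxy, map_smul] at h1
  have h2 : symOn F H n b v + symOn F H n b v = 0 := by
    nth_rewrite 1 [← h1]
    rw [neg_smul, one_smul, neg_add_cancel]
  have h3 : (2 : F) • symOn F H n b v = 0 := by
    rw [two_smul]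
    exact h2
  exact (smul_eq_zero.1 h3).resolve_left two_ne_zero

theorem altOn_eq_zero {b c : Finset (Fin n)} {x y : Fin n} (hxb : x ∈ b) (hyb : y ∈ b)
    (hxc : x ∈ c) (hyc : y ∈ c) (hxy : x ≠ y) {v : TP F H n}
    (hv : ∀ σ ∈ permsOn n b, permMap F H n σ v = v) :
    altOn F H n c v = 0 := by
  have hτb : Equiv.swap x y ∈ permsOn n b := mem_permsOn.2 fun i hi =>
    Equiv.swap_apply_of_ne_of_ne (fun h => hi (h ▸ hxb)) (fun h => hi (h ▸ hyb))
  have hτc : Equiv.swap x y ∈ permsOn n c := mem_permsOn.2 fun i hi =>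
    Equiv.swap_apply_of_ne_of_ne (fun h => hi (h ▸ hxc)) (fun h => hi (h ▸ hyc))
  have h1 : altOn F H n c (permMap F H n (Equiv.swap x y) v)
      = sgn F (Equiv.swap x y) • altOn F H n c v := altOn_perm F H hτc v
  rw [hv _ hτb, sgn_swap F hxy] at h1
  have h2 : altOn F H n c v + altOn F H n c v = 0 := by
    nth_rewrite 1 [h1]
    rw [neg_smul, one_smul, neg_add_cancel]
  have h3 : (2 : F) • altOn F H n c v = 0 := by
    rw [two_smul]
    exact h2
  exact (smul_eq_zero.1 h3).resolve_left two_ne_zero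


theorem swap_self_eq_one (x : Fin n) : Equiv.swap x x = (1 : Equiv.Perm (Fin n)) :=
  Equiv.swap_self x

theorem swap_mem_permsOn {a : Finset (Fin n)} {x y : Fin n} (hx : x ∈ a) (hy : y ∈ a) :
    Equiv.swap x y ∈ permsOn n a :=
  mem_permsOn.2 fun i hi =>
    Equiv.swap_apply_of_ne_of_ne (fun h => hi (h ▸ hx)) (fun h => hi (h ▸ hy))

/-- The two `P`-conjugation computations. `P := symOn a ∘ altOn aᶜ`. -/
theorem P_conj_sym {a : Finset (Fin n)} {i₀ j₀ l : Fin n} (hi₀ : i₀ ∈ a) (hj₀ : j₀ ∉ a)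
    (hl : l ∈ a) {v : TP F H n}
    (h1 : ∀ σ ∈ permsOn n a, permMap F H n σ v = v) :
    symOn F H n a (altOn F H n aᶜ (permMap F H n (Equiv.swap j₀ l) v))
      = symOn F H n a (altOn F H n aᶜ (permMap F H n (Equiv.swap j₀ i₀) v)) := by
  by_cases hli : l = i₀
  · rw [hli]
  · have hji : j₀ ≠ i₀ := fun h => hj₀ (h ▸ hi₀)
    have hjl : j₀ ≠ l := fun h => hj₀ (h ▸ hl)
    have hswap : Equiv.swap i₀ l * Equiv.swap j₀ i₀ * Equiv.swap i₀ l = Equiv.swap j₀ l := by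
      rw [Equiv.swap_mul_swap_mul_swap hji hjl, Equiv.swap_comm]
    have hτ : Equiv.swap i₀ l ∈ permsOn n a := swap_mem_permsOn hi₀ hl
    have hexp : permMap F H n (Equiv.swap j₀ l) v
        = permMap F H n (Equiv.swap i₀ l)
            (permMap F H n (Equiv.swap j₀ i₀) (permMap F H n (Equiv.swap i₀ l) v)) := by
      rw [← permMap_mul_apply, ← permMap_mul_apply, hswap]
    rw [hexp, h1 _ hτ, ← perm_altOn_comm F H disjoint_compl_right hτ, symOn_perm F H hτ]

theorem P_conj_alt {a : Finset (Fin n)} {i₀ j₀ l : Fin n} (hi₀ : i₀ ∈ a) (hj₀ : j₀ ∉ a)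
    (hl : l ∉ a) {v : TP F H n}
    (h2 : ∀ σ ∈ permsOn n aᶜ, permMap F H n σ v = sgn F σ • v) :
    symOn F H n a (altOn F H n aᶜ (permMap F H n (Equiv.swap i₀ l) v))
      = symOn F H n a (altOn F H n aᶜ (permMap F H n (Equiv.swap j₀ i₀) v)) := by
  have hij : i₀ ≠ j₀ := fun h => hj₀ (h ▸ hi₀)
  by_cases hlj : l = j₀
  · rw [hlj, Equiv.swap_comm]
  · have hil : i₀ ≠ l := fun h => hl (h ▸ hi₀)
    have hswap : Equiv.swap j₀ l * Equiv.swap i₀ j₀ * Equiv.swap j₀ l = Equiv.swap i₀ l := by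
      rw [Equiv.swap_mul_swap_mul_swap hij (by exact hil), Equiv.swap_comm]
    have hρ : Equiv.swap j₀ l ∈ permsOn n aᶜ :=
      swap_mem_permsOn (Finset.mem_compl.2 hj₀) (Finset.mem_compl.2 hl)
    have hexp : permMap F H n (Equiv.swap i₀ l) v
        = permMap F H n (Equiv.swap j₀ l)
            (permMap F H n (Equiv.swap i₀ j₀) (permMap F H n (Equiv.swap j₀ l) v)) := by
      rw [← permMap_mul_apply, ← permMap_mul_apply, hswap]
    have hsρ : sgn F (Equiv.swap j₀ l) = -1 := sgn_swap F (fun h => hlj h.symm)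
    rw [hexp, h2 _ hρ, hsρ, map_smul, map_smul, map_smul, altOn_perm F H hρ, hsρ, map_smul,
      Equiv.swap_comm i₀ j₀, map_smul, smul_smul]
    norm_num


theorem key_sym {a : Finset (Fin n)} {i₀ j₀ : Fin n} (hi₀ : i₀ ∈ a) (hj₀ : j₀ ∉ a)
    {v : TP F H n}
    (h1 : ∀ σ ∈ permsOn n a, permMap F H n σ v = v)
    (h2 : ∀ σ ∈ permsOn n aᶜ, permMap F H n σ v = sgn F σ • v) :
    symOn F H n a (altOn F H n aᶜ (symOn F H n (insert j₀ a) v))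
      = ((a.card + 1 : ℕ) : F)⁻¹ • (v + (a.card : F) •
          symOn F H n a (altOn F H n aᶜ (permMap F H n (Equiv.swap j₀ i₀) v))) := by
  have hPv : symOn F H n a (altOn F H n aᶜ v) = v := by
    rw [altOn_of_skewFixed F H h2, symOn_of_fixed F H h1]
  rw [symOn_insert_eq F H hj₀ h1, map_smul, map_smul, map_sum, map_sum,
    Finset.sum_insert hj₀, swap_self_eq_one]
  have hone : altOn F H n aᶜ (permMap F H n 1 v) = altOn F H n aᶜ v := by
    rw [permMap_one]
  rw [hone, hPv]
  congr 2
  rw [Finset.sum_congr rfl (fun l hl => P_conj_sym F H hi₀ hj₀ hl h1),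
    Finset.sum_const, ← Nat.cast_smul_eq_nsmul (R := F)]

theorem key_alt {a : Finset (Fin n)} {i₀ j₀ : Fin n} (hi₀ : i₀ ∈ a) (hj₀ : j₀ ∉ a)
    {v : TP F H n}
    (h1 : ∀ σ ∈ permsOn n a, permMap F H n σ v = v)
    (h2 : ∀ σ ∈ permsOn n aᶜ, permMap F H n σ v = sgn F σ • v) :
    symOn F H n a (altOn F H n aᶜ (altOn F H n (insert i₀ aᶜ) v))
      = ((aᶜ.card + 1 : ℕ) : F)⁻¹ • (v - (aᶜ.card : F) •
          symOn F H n a (altOn F H n aᶜ (permMap F H n (Equiv.swap j₀ i₀) v))) := by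
  have hPv : symOn F H n a (altOn F H n aᶜ v) = v := by
    rw [altOn_of_skewFixed F H h2, symOn_of_fixed F H h1]
  have hi₀c : i₀ ∉ aᶜ := by simp [hi₀]
  rw [altOn_insert_eq F H hi₀c h2, map_smul, map_smul, map_sum, map_sum,
    Finset.sum_insert hi₀c, swap_self_eq_one, sgn_one, one_smul]
  have hone : altOn F H n aᶜ (permMap F H n 1 v) = altOn F H n aᶜ v := by
    rw [permMap_one]
  rw [hone, hPv]
  congr 1
  have hterm : ∀ l ∈ aᶜ,
      symOn F H n a (altOn F H n aᶜ (sgn F (Equiv.swap i₀ l) • permMap F H n (Equiv.swap i₀ l) v))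
      = -(symOn F H n a (altOn F H n aᶜ (permMap F H n (Equiv.swap j₀ i₀) v))) := by
    intro l hl
    have hla : l ∉ a := Finset.mem_compl.1 hl
    have hil : i₀ ≠ l := fun h => hla (h ▸ hi₀)
    rw [map_smul, map_smul, sgn_swap F hil, P_conj_alt F H hi₀ hj₀ hla h2, neg_one_smul]
  rw [Finset.sum_congr rfl hterm, Finset.sum_const, ← Nat.cast_smul_eq_nsmul (R := F),
    smul_neg, ← sub_eq_add_neg]


theorem symOn_insert_mem_Hgen {a : Finset (Fin n)} {j₀ : Fin n} (hj₀ : j₀ ∉ a) {v : TP F H n}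
    (h2 : ∀ σ ∈ permsOn n aᶜ, permMap F H n σ v = sgn F σ • v) :
    symOn F H n (insert j₀ a) v ∈ Hgen F H n (insert j₀ a) := by
  refine (mem_Hgen F H).2 ⟨fun σ hσ => perm_symOn F H hσ _, fun σ hσ => ?_⟩
  have hσ' : σ ∈ permsOn n aᶜ :=
    permsOn_mono (Finset.compl_subset_compl.2 (Finset.subset_insert j₀ a)) hσ
  rw [perm_symOn_comm F H disjoint_compl_left hσ, h2 σ hσ', map_smul]

theorem altOn_insert_mem_Hgen {a : Finset (Fin n)} {i₀ : Fin n} (hi₀ : i₀ ∈ a) {v : TP F H n}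
    (h1 : ∀ σ ∈ permsOn n a, permMap F H n σ v = v) :
    altOn F H n (insert i₀ aᶜ) v ∈ Hgen F H n (a.erase i₀) := by
  have hce : (a.erase i₀)ᶜ = insert i₀ aᶜ := Finset.compl_erase
  refine (mem_Hgen F H).2 ⟨fun σ hσ => ?_, fun σ hσ => ?_⟩
  · have hσ' : σ ∈ permsOn n a := permsOn_mono (Finset.erase_subset i₀ a) hσ
    have hd : Disjoint (a.erase i₀) (insert i₀ aᶜ) := by
      rw [← hce]
      exact disjoint_compl_right
    rw [perm_altOn_comm F H hd hσ, h1 σ hσ']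
  · rw [hce] at hσ
    exact perm_altOn F H hσ _

end StatementAux

open StatementAux in
/-- Decomposition for an arbitrary position set: for `k ≥ 1`, `q ≥ 1` with
`n = k + q` and every `k`-element subset `a ⊆ {1,…,n}`, the subspace `H^{⊙a,∧aᶜ}` of
`H^{⊗n}` decomposes as the internal direct sum
`H^{⊙a,∧aᶜ} = (H^{⊙a,∧aᶜ} ∩ H^{⊙[k+1],∧[q-1]}) ⊕ (H^{⊙a,∧aᶜ} ∩ H^{⊙[k-1],∧[q+1]})`. -/
theorem Hgen_direct_sum (k q : ℕ) (hk : 1 ≤ k) (hq : 1 ≤ q)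
    (a : Finset (Fin (k + q))) (ha : a.card = k) :
    (Hgen F H (k + q) a ⊓ HmixSpan F H (k + q) (k + 1)) ⊓
        (Hgen F H (k + q) a ⊓ HmixSpan F H (k + q) (k - 1)) = ⊥ ∧
    (Hgen F H (k + q) a ⊓ HmixSpan F H (k + q) (k + 1)) ⊔
        (Hgen F H (k + q) a ⊓ HmixSpan F H (k + q) (k - 1)) = Hgen F H (k + q) a := by
  classical
  obtain ⟨i₀, hi₀⟩ : a.Nonempty := Finset.card_pos.1 (by omega)
  have hccard : aᶜ.card = q := by
    rw [Finset.card_compl, Fintype.card_fin, ha]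
    omega
  obtain ⟨j₀, hj₀c⟩ : (aᶜ).Nonempty := Finset.card_pos.1 (by omega)
  have hj₀ : j₀ ∉ a := Finset.mem_compl.1 hj₀c
  have hi₀c : i₀ ∉ aᶜ := by simp [hi₀]
  have hins : (insert j₀ a).card = k + 1 := by
    rw [Finset.card_insert_of_notMem hj₀, ha]
  have hinsc : (insert i₀ aᶜ).card = q + 1 := by
    rw [Finset.card_insert_of_notMem hi₀c, hccard]
  have herase : (a.erase i₀).card = k - 1 := by
    rw [Finset.card_erase_of_mem hi₀, ha]
  -- the decomposition identity
  have main : ∀ v ∈ Hgen F H (k + q) a,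
      v = ((q : F) * ((k : F) + 1) / ((k : F) + (q : F))) •
            symOn F H (k + q) a (altOn F H (k + q) aᶜ (symOn F H (k + q) (insert j₀ a) v))
        + ((k : F) * ((q : F) + 1) / ((k : F) + (q : F))) •
            symOn F H (k + q) a (altOn F H (k + q) aᶜ (altOn F H (k + q) (insert i₀ aᶜ) v)) := by
    intro v hv
    obtain ⟨h1, h2⟩ := (mem_Hgen F H).1 hv
    rw [key_sym F H hi₀ hj₀ h1 h2, key_alt F H hi₀ hj₀ h1 h2, ha, hccard]
    have hk0 : ((k : F) + 1) ≠ 0 := by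
      have : ((k + 1 : ℕ) : F) ≠ 0 := Nat.cast_ne_zero.2 (by omega)
      push_cast at this
      exact this
    have hq0 : ((q : F) + 1) ≠ 0 := by
      have : ((q + 1 : ℕ) : F) ≠ 0 := Nat.cast_ne_zero.2 (by omega)
      push_cast at this
      exact this
    have hn0 : ((k : F) + (q : F)) ≠ 0 := by
      have : ((k + q : ℕ) : F) ≠ 0 := Nat.cast_ne_zero.2 (by omega)
      push_cast at this
      exact this
    match_scalars <;> push_cast <;> field_simp <;> ring
  -- membership of the two components
  have memPlus : ∀ v ∈ Hgen F H (k + q) a,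
      symOn F H (k + q) a (altOn F H (k + q) aᶜ (symOn F H (k + q) (insert j₀ a) v)) ∈
        Hgen F H (k + q) a ⊓ HmixSpan F H (k + q) (k + 1) := by
    intro v hv
    obtain ⟨h1, h2⟩ := (mem_Hgen F H).1 hv
    refine Submodule.mem_inf.2 ⟨⟨symOn F H (k + q) (insert j₀ a) v, rfl⟩, ?_⟩
    exact symOn_mem_HmixSpan F H a (altOn_mem_HmixSpan F H aᶜ
      (Hgen_le_HmixSpan F H hins (symOn_insert_mem_Hgen F H hj₀ h2)))
  have memMinus : ∀ v ∈ Hgen F H (k + q) a,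
      symOn F H (k + q) a (altOn F H (k + q) aᶜ (altOn F H (k + q) (insert i₀ aᶜ) v)) ∈
        Hgen F H (k + q) a ⊓ HmixSpan F H (k + q) (k - 1) := by
    intro v hv
    obtain ⟨h1, h2⟩ := (mem_Hgen F H).1 hv
    refine Submodule.mem_inf.2 ⟨⟨altOn F H (k + q) (insert i₀ aᶜ) v, rfl⟩, ?_⟩
    exact symOn_mem_HmixSpan F H a (altOn_mem_HmixSpan F H aᶜ
      (Hgen_le_HmixSpan F H herase (altOn_insert_mem_Hgen F H hi₀ h1)))
  -- the two kill lemmas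
  have killSym : ∀ w ∈ HmixSpan F H (k + q) (k - 1),
      symOn F H (k + q) (insert j₀ a) w = 0 := by
    intro w hw
    have hle : HmixSpan F H (k + q) (k - 1) ≤
        LinearMap.ker (symOn F H (k + q) (insert j₀ a)) := by
      refine iSup₂_le fun b hb => fun u hu => ?_
      obtain ⟨g1, g2⟩ := (mem_Hgen F H).1 hu
      rw [LinearMap.mem_ker]
      have hbc : b.card = k - 1 := hb
      have hbcc : (bᶜ).card = q + 1 := by
        rw [Finset.card_compl, Fintype.card_fin, hbc]
        omega
      have hcard2 : 1 < ((insert j₀ a) ∩ bᶜ).card := by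
        have h3 := Finset.card_inter_add_card_union (insert j₀ a) bᶜ
        have h4 : ((insert j₀ a) ∪ bᶜ).card ≤ k + q := by
          calc ((insert j₀ a) ∪ bᶜ).card ≤ (Finset.univ : Finset (Fin (k + q))).card :=
                Finset.card_le_univ _
            _ = k + q := by rw [Finset.card_univ, Fintype.card_fin]
        omega
      obtain ⟨x, hx, y, hy, hxy⟩ := Finset.one_lt_card.1 hcard2
      obtain ⟨hx1, hx2⟩ := Finset.mem_inter.1 hx
      obtain ⟨hy1, hy2⟩ := Finset.mem_inter.1 hy
      exact symOn_eq_zero F H hx1 hy1 hx2 hy2 hxy g2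
    exact LinearMap.mem_ker.1 (hle hw)
  have killAlt : ∀ w ∈ HmixSpan F H (k + q) (k + 1),
      altOn F H (k + q) (insert i₀ aᶜ) w = 0 := by
    intro w hw
    have hle : HmixSpan F H (k + q) (k + 1) ≤
        LinearMap.ker (altOn F H (k + q) (insert i₀ aᶜ)) := by
      refine iSup₂_le fun b hb => fun u hu => ?_
      obtain ⟨g1, g2⟩ := (mem_Hgen F H).1 hu
      rw [LinearMap.mem_ker]
      have hbc : b.card = k + 1 := hb
      have hcard2 : 1 < (b ∩ (insert i₀ aᶜ)).card := by
        have h3 := Finset.card_inter_add_card_union b (insert i₀ aᶜ)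
        have h4 : (b ∪ (insert i₀ aᶜ)).card ≤ k + q := by
          calc (b ∪ (insert i₀ aᶜ)).card ≤ (Finset.univ : Finset (Fin (k + q))).card :=
                Finset.card_le_univ _
            _ = k + q := by rw [Finset.card_univ, Fintype.card_fin]
        omega
      obtain ⟨x, hx, y, hy, hxy⟩ := Finset.one_lt_card.1 hcard2
      obtain ⟨hx1, hx2⟩ := Finset.mem_inter.1 hx
      obtain ⟨hy1, hy2⟩ := Finset.mem_inter.1 hy
      exact altOn_eq_zero F H hx1 hy1 hx2 hy2 hxy g1
    exact LinearMap.mem_ker.1 (hle hw)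
  constructor
  · rw [eq_bot_iff]
    intro w hw
    obtain ⟨hw1, hw2⟩ := Submodule.mem_inf.1 hw
    obtain ⟨hwa, hwp⟩ := Submodule.mem_inf.1 hw1
    obtain ⟨-, hwm⟩ := Submodule.mem_inf.1 hw2
    have hmain := main w hwa
    rw [killSym w hwm, killAlt w hwp] at hmain
    simp only [map_zero, smul_zero, add_zero] at hmain
    rw [Submodule.mem_bot]
    exact hmain
  · refine le_antisymm (sup_le inf_le_left inf_le_left) ?_
    intro v hv
    rw [main v hv]
    exact Submodule.add_mem_sup
      (Submodule.smul_mem _ _ (memPlus v hv))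
      (Submodule.smul_mem _ _ (memMinus v hv))

end
end
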